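/- Suppose Ω_{t-1} is symmetric positive definite with all eigenvalues in (0,1], β, ρ > 0, and M is symmetric positive semi-definite. Then Ω_t := ((β Ω_{t-1}^{-1} + ρ I + M)/(β+ρ))^{-1} is symmetric positive definite with all eigenvalues in (0,1]. -/

import Mathlib

open Matrix

/-! Write `Ω_t = B⁻¹` with `B = (β Ω⁻¹ + ρ I + M)/(β + ρ)`. Conjugating by an invertible
self-adjoint square root shows that for positive definite `B`, `B ≥ I` iff `B⁻¹ ≤ I`, in the
Loewner order. Applied to `Ω⁻¹` it gives `Ω⁻¹ ≥ I`, hence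
`B - I = (β (Ω⁻¹ - I) + M)/(β + ρ) ≥ 0`; applied to `B` it gives `Ω_t ≤ I`. -/

open scoped MatrixOrder ComplexOrder in
theorem Matrix.PosDef.posSemidef_sub_one_iff_posSemidef_one_sub_inv {𝕜 n : Type*} [RCLike 𝕜]
    [Fintype n] [DecidableEq n] {B : Matrix n n 𝕜} (hB : B.PosDef) :
    (B - 1).PosSemidef ↔ (1 - B⁻¹).PosSemidef := by
  set T := CFC.sqrt B
  have hT : IsUnit T := (CFC.isUnit_sqrt_iff B hB.posSemidef.nonneg).2 hB.isUnit
  have hTT : T * T = B := CFC.sqrt_mul_sqrt_self B hB.posSemidef.nonneg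
  have hT_inv_star : star T⁻¹ = T⁻¹ := by
    rw [star_eq_conjTranspose, conjTranspose_nonsing_inv,
      (CFC.sqrt_nonneg B).posSemidef.isHermitian.eq]
  have hconj : T⁻¹ * (B - 1) * star T⁻¹ = 1 - B⁻¹ := by
    have hdet := (isUnit_iff_isUnit_det T).1 hT
    rw [hT_inv_star, ← hTT, mul_inv_rev, mul_sub, sub_mul, mul_one, ← mul_assoc,
      nonsing_inv_mul _ hdet, one_mul, mul_nonsing_inv _ hdet]
  rw [← hconj, (isUnit_nonsing_inv_iff.2 hT).posSemidef_star_right_conjugate_iff]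

-- Eigenvalues in (0,1] are encoded as `PosDef` together with `1 - Ω` being `PosSemidef`.
/-- If Ω_{t-1} is symmetric PD with eigenvalues in (0,1], β, ρ > 0, and M is PSD, then
Ω_t = ((β Ω_{t-1}⁻¹ + ρ I + M)/(β+ρ))⁻¹ is symmetric PD with eigenvalues in (0,1].
(For a symmetric matrix, eigenvalues in (0,1] is equivalent to PosDef together with
I − Ω being PosSemidef.) -/
theorem omega_update_eigenvalues_in_unit_interval {m : ℕ}
    (Ω M : Matrix (Fin m) (Fin m) ℝ) (β ρ : ℝ)
    (hβ : 0 < β) (hρ : 0 < ρ)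
    (hΩ : Ω.PosDef) (hΩ1 : ((1 : Matrix (Fin m) (Fin m) ℝ) - Ω).PosSemidef)
    (hM : M.PosSemidef) :
    (((β + ρ)⁻¹ • (β • Ω⁻¹ + ρ • (1 : Matrix (Fin m) (Fin m) ℝ) + M))⁻¹).PosDef ∧
    ((1 : Matrix (Fin m) (Fin m) ℝ) -
      ((β + ρ)⁻¹ • (β • Ω⁻¹ + ρ • (1 : Matrix (Fin m) (Fin m) ℝ) + M))⁻¹).PosSemidef := by
  set B := (β + ρ)⁻¹ • (β • Ω⁻¹ + ρ • (1 : Matrix (Fin m) (Fin m) ℝ) + M)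
  have hΩ_inv_ge : (Ω⁻¹ - 1).PosSemidef := by
    rwa [hΩ.inv.posSemidef_sub_one_iff_posSemidef_one_sub_inv,
      nonsing_inv_nonsing_inv _ ((isUnit_iff_isUnit_det Ω).1 hΩ.isUnit)]
  have hB_ge : (B - 1).PosSemidef := by
    have hB_sub : B - 1 = (β + ρ)⁻¹ • (β • (Ω⁻¹ - 1) + M) := by
      match_scalars <;> field_simp
      ring
    rw [hB_sub]
    exact ((hΩ_inv_ge.smul hβ.le).add hM).smul (by positivity)
  have hB : B.PosDef := by simpa using PosDef.one.add_posSemidef hB_ge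
  exact ⟨hB.inv, hB.posSemidef_sub_one_iff_posSemidef_one_sub_inv.1 hB_ge⟩
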